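/- Fix a positive integer q, an integer p with gcd(p,q) = 1, and real numbers x₂, x₃. Then ρ_{(p/q,x₂,x₃)} is irreducible in the following sense: every ℂ-linear map T : ℂ^{ℤ/qℤ} → ℂ^{ℤ/qℤ} satisfying T ∘ ρ_{(p/q,x₂,x₃)}(n) = ρ_{(p/q,x₂,x₃)}(n) ∘ T for all n ∈ Heis₃(ℤ) is a scalar multiple of the identity. -/

import Mathlib

open Real

/-- The finite-dimensional representation `ρ_{(p/q, x₂, x₃)}` of the discrete Heisenberg group
`Heis₃(ℤ)` (elements written as triples `n = (n₁, n₂, n₃)` of integers) on `ℂ^{ℤ/qℤ}`: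
`(ρ(n)φ)(k) = exp((2πi/q)(n₃x₃ + n₂x₂ + n₁p + k n₂ p)) φ(k + n₃)`. -/
noncomputable def rhoFin (q : ℕ) [NeZero q] (p : ℤ) (x₂ x₃ : ℝ) (n : ℤ × ℤ × ℤ)
    (φ : EuclideanSpace ℂ (ZMod q)) : EuclideanSpace ℂ (ZMod q) :=
  WithLp.toLp 2 (fun k => Complex.exp ((2 * (π : ℂ) * Complex.I / (q : ℂ)) *
      ((n.2.2 : ℂ) * (x₃ : ℂ) + (n.2.1 : ℂ) * (x₂ : ℂ) + (n.1 : ℂ) * (p : ℂ) +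
        (k.val : ℂ) * (n.2.1 : ℂ) * (p : ℂ))) *
    φ (k + (n.2.2 : ZMod q)))

/-- For `gcd(p,q) = 1` the representation `ρ_{(p/q,x₂,x₃)}` is irreducible:
every linear map commuting with all the operators `ρ_{(p/q,x₂,x₃)}(n)`, `n ∈ Heis₃(ℤ)`,
is a scalar multiple of the identity. -/
theorem rhoFin_irreducible (q : ℕ) [NeZero q] (p : ℤ) (hcop : Int.gcd p (q : ℤ) = 1)
    (x₂ x₃ : ℝ)
    (T : EuclideanSpace ℂ (ZMod q) →ₗ[ℂ] EuclideanSpace ℂ (ZMod q))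
    (hT : ∀ (n : ℤ × ℤ × ℤ) (φ : EuclideanSpace ℂ (ZMod q)),
      T (rhoFin q p x₂ x₃ n φ) = rhoFin q p x₂ x₃ n (T φ)) :
    ∃ c : ℂ, ∀ φ : EuclideanSpace ℂ (ZMod q), T φ = c • φ := by
  classical
  have hq0 : (q : ℂ) ≠ 0 := Nat.cast_ne_zero.mpr (NeZero.ne q)
  have h2pi : (2 * (π : ℂ) * Complex.I) ≠ 0 :=
    mul_ne_zero (mul_ne_zero two_ne_zero (Complex.ofReal_ne_zero.mpr Real.pi_ne_zero))
      Complex.I_ne_zero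
  set c0 : ℂ := 2 * (π : ℂ) * Complex.I / (q : ℂ) with hc0
  set e : ZMod q → EuclideanSpace ℂ (ZMod q) := fun j => EuclideanSpace.single j 1 with he
  set lam : ZMod q → ℂ := fun k => Complex.exp (c0 * ((x₂ : ℂ) + (k.val : ℂ) * (p : ℂ)))
    with hlam
  -- the modulation operator
  have hM : ∀ (φ : EuclideanSpace ℂ (ZMod q)) (k : ZMod q),
      rhoFin q p x₂ x₃ (0, 1, 0) φ k = lam k * φ k := by
    intro φ k
    have h0 : k + ((0:ℤ) : ZMod q) = k := by push_cast; ring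
    simp only [rhoFin, hlam, WithLp.ofLp_toLp]
    push_cast
    ring_nf
    rw [hc0]
    ring_nf
  -- the shift operator
  set mu : ℂ := Complex.exp (c0 * (x₃ : ℂ)) with hmu
  have hmu0 : mu ≠ 0 := Complex.exp_ne_zero _
  have hS : ∀ (φ : EuclideanSpace ℂ (ZMod q)) (k : ZMod q),
      rhoFin q p x₂ x₃ (0, 0, 1) φ k = mu * φ (k + 1) := by
    intro φ k
    have h1 : k + ((1:ℤ) : ZMod q) = k + 1 := by push_cast; ring
    simp only [rhoFin, hmu, WithLp.ofLp_toLp]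
    push_cast
    ring_nf
    rw [hc0]
    ring_nf
  -- the eigenvalues lam are pairwise distinct
  have hlam_inj : Function.Injective lam := by
    intro j k h
    rw [hlam, Complex.exp_eq_exp_iff_exists_int] at h
    obtain ⟨m, hm⟩ := h
    have hmain : ((j.val : ℂ) * p - (k.val : ℂ) * p) = m * q := by
      have hq : c0 * (q : ℂ) = 2 * (π : ℂ) * Complex.I := by
        rw [hc0]; field_simp
      have hqm := congrArg (fun z => z * (q : ℂ)) hm
      have h2 : (2 * (π : ℂ) * Complex.I) * ((j.val : ℂ) * p - (k.val : ℂ) * p - m * q) = 0 := by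
        rw [hc0] at hqm
        field_simp at hqm ⊢
        ring_nf at hqm ⊢
        linear_combination (2 * (π : ℂ) * Complex.I) * hqm
      rcases mul_eq_zero.mp h2 with h | h
      · exact absurd h h2pi
      · linear_combination h
    have hint : ((j.val : ℤ) * p - (k.val : ℤ) * p) = m * q := by exact_mod_cast hmain
    have hdvd : (q : ℤ) ∣ ((j.val : ℤ) - (k.val : ℤ)) * p := ⟨m, by linarith⟩
    have hco : IsCoprime (q : ℤ) p := (Int.isCoprime_iff_gcd_eq_one.mpr hcop).symm
    have hdvd2 : (q : ℤ) ∣ ((j.val : ℤ) - (k.val : ℤ)) := hco.dvd_of_dvd_mul_right hdvd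
    have hcast : ((k.val : ℤ) : ZMod q) = ((j.val : ℤ) : ZMod q) :=
      (ZMod.intCast_eq_intCast_iff _ _ _).mpr (Int.modEq_iff_dvd.mpr hdvd2)
    have hj : ((j.val : ℤ) : ZMod q) = j := by
      rw [Int.cast_natCast]; exact ZMod.natCast_zmod_val j
    have hk : ((k.val : ℤ) : ZMod q) = k := by
      rw [Int.cast_natCast]; exact ZMod.natCast_zmod_val k
    rw [hj, hk] at hcast
    exact hcast.symm
  -- T is diagonal
  have hMe : ∀ j, rhoFin q p x₂ x₃ (0, 1, 0) (e j) = lam j • e j := by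
    intro j
    ext k
    have hl : (lam j • e j) k = lam j * e j k := rfl
    rw [hl, hM]
    rcases eq_or_ne k j with rfl | hkj
    · rfl
    · have hz : e j k = 0 := by simp [he, EuclideanSpace.single_apply, hkj]
      rw [hz, mul_zero, mul_zero]
  have hoff : ∀ j k, k ≠ j → T (e j) k = 0 := by
    intro j k hkj
    have h := hT (0, 1, 0) (e j)
    rw [hMe j, map_smul] at h
    have h2 := congrFun (congrArg WithLp.ofLp h) k
    have hl : (lam j • T (e j)) k = lam j * T (e j) k := rfl
    rw [hl, hM] at h2
    have hne : lam j - lam k ≠ 0 := sub_ne_zero.mpr (fun hh => hkj (hlam_inj hh.symm))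
    have hz : (lam j - lam k) * T (e j) k = 0 := by linear_combination h2
    exact (mul_eq_zero.mp hz).resolve_left hne
  set d : ZMod q → ℂ := fun j => T (e j) j with hd
  have hee : ∀ j : ZMod q, e j j = 1 := by
    intro j; simp [he, EuclideanSpace.single_apply]
  have hTe : ∀ j, T (e j) = d j • e j := by
    intro j
    ext k
    have hl : (d j • e j) k = d j * e j k := rfl
    rw [hl]
    rcases eq_or_ne k j with rfl | hkj
    · rw [hee, mul_one]
    · rw [hoff j k hkj]
      have hz : e j k = 0 := by simp [he, EuclideanSpace.single_apply, hkj]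
      rw [hz, mul_zero]
  -- shift action on basis vectors
  have hSe : ∀ j, rhoFin q p x₂ x₃ (0, 0, 1) (e j) = mu • e (j - 1) := by
    intro j
    ext k
    have hl : (mu • e (j-1)) k = mu * e (j-1) k := rfl
    rw [hl, hS]
    congr 1
    simp only [he, EuclideanSpace.single_apply]
    congr 1
    simp only [eq_iff_iff]
    constructor
    · intro h; rw [← h]; ring
    · intro h; rw [h]; ring
  -- the diagonal is constant
  have hdc : ∀ j, d (j - 1) = d j := by
    intro j
    have h := hT (0, 0, 1) (e j)
    rw [hSe j, map_smul, hTe (j-1), hTe j] at h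
    have h2 := congrFun (congrArg WithLp.ofLp h) (j - 1)
    have hL : (mu • d (j-1) • e (j-1)) (j-1) = mu * (d (j-1) * e (j-1) (j-1)) := rfl
    rw [hL, hee] at h2
    rw [hS] at h2
    have hR : (d j • e j) (j - 1 + 1) = d j * e j (j - 1 + 1) := rfl
    rw [hR] at h2
    have hj1 : j - 1 + 1 = j := by ring
    rw [hj1, hee] at h2
    have := mul_left_cancel₀ hmu0 h2
    simpa using this
  have hstep : ∀ j : ZMod q, d (j + 1) = d j := by
    intro j
    have := hdc (j + 1)
    simpa using this.symm
  have hconst : ∀ n : ℕ, d ((n : ZMod q)) = d 0 := by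
    intro n
    induction n with
    | zero => simp
    | succ n ih => push_cast; rw [hstep]; exact ih
  have hdj : ∀ j : ZMod q, d j = d 0 := by
    intro j
    have := hconst j.val
    rwa [ZMod.natCast_zmod_val j] at this
  -- conclusion
  refine ⟨d 0, fun φ => ?_⟩
  have hrep : φ = ∑ j, φ j • e j := by
    ext k
    have hsum : (∑ j, φ j • e j) k = ∑ j, (φ j • e j) k :=
      by rw [WithLp.ofLp_sum]; exact Finset.sum_apply k Finset.univ _
    rw [hsum]
    have : ∀ j, (φ j • e j) k = φ j * e j k := fun j => rfl
    simp only [this, he, EuclideanSpace.single_apply]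
    simp
  conv_lhs => rw [hrep]
  rw [map_sum]
  conv_rhs => rw [hrep]
  rw [Finset.smul_sum]
  refine Finset.sum_congr rfl fun j _ => ?_
  rw [map_smul, hTe j, hdj j, smul_comm]
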